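/- For every natural number n ≥ 2, the recurrence h_n(x,s) = x · h_{n-1}(x,s) + q^{n-1} s [n-1]_q · h_{n-2}(x,s) holds. -/

import Mathlib

noncomputable section

/-- The field `ℚ(q,s)` of rational functions in two indeterminates. -/
abbrev F : Type := FractionRing (MvPolynomial (Fin 2) ℚ)

/-- The indeterminate `q`. -/
def q : F := algebraMap (MvPolynomial (Fin 2) ℚ) F (MvPolynomial.X 0)

/-- The indeterminate `s`. -/
def s : F := algebraMap (MvPolynomial (Fin 2) ℚ) F (MvPolynomial.X 1)

/-- The q-integer `[n]_q = 1 + q + ⋯ + q^{n-1}`. -/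
def qInt (n : ℕ) : F := ∑ i ∈ Finset.range n, q ^ i

/-- The q-factorial `[n]_q! = ∏_{k=1}^n [k]_q`. -/
def qFact (n : ℕ) : F := ∏ k ∈ Finset.range n, qInt (k + 1)

/-- The q-binomial coefficient `[n choose k]_q = [n]_q!/([k]_q! [n-k]_q!)`. -/
def qBinom (n k : ℕ) : F := qFact n / (qFact k * qFact (n - k))

/-- The operator `X` of multiplication by `x` on `F[x]`. -/
def Xop : Module.End F (Polynomial F) := LinearMap.mulLeft F Polynomial.X

/-- Division by `x` (discarding the constant term), as a linear map. -/
def divXL : Polynomial F →ₗ[F] Polynomial F where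
  toFun := Polynomial.divX
  map_add' p r := Polynomial.divX_add
  map_smul' a p := by
    ext n
    simp [Polynomial.coeff_divX, Polynomial.coeff_smul]

/-- The q-derivative `D_q f(x) = (f(qx) - f(x))/((q-1)x)`; it is the F-linear
operator on `F[x]` determined by `D_q x^n = [n]_q x^{n-1}`. -/
def Dq : Module.End F (Polynomial F) :=
  (q - 1)⁻¹ •
    (divXL ∘ₗ
      ((Polynomial.aeval (Polynomial.C q * Polynomial.X)).toLinearMap - LinearMap.id))

/-- The polynomials `h_n(x,t) = Σ_j q^{j²} t^j [n]_q!/((1+q)⋯(1+q^j)·[j]_q!·[n-2j]_q!)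
x^{n-2j}` (the parameter `t` will be specialized to `s` or `q²s`). -/
def h (t : F) (n : ℕ) : Polynomial F :=
  ∑ j ∈ Finset.range (n / 2 + 1),
    Polynomial.C (q ^ (j ^ 2) * t ^ j * qFact n /
        ((∏ i ∈ Finset.range j, (1 + q ^ (i + 1))) * qFact j * qFact (n - 2 * j))) *
      Polynomial.X ^ (n - 2 * j)

/-!
Write the coefficient of `x^{n-2j}` in `h_n(x,t)` as `w_j(t) · [n]_q!/[n-2j]_q!` with
`w_j(t) = q^{j²} t^j / ((1+q)⋯(1+q^j) [j]_q!)`. The falling q-factorial `[n]_q!/[n-2j]_q!`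
vanishes by itself once `2j > n`, so `h_{m+2}`, `x h_{m+1}` and `h_m` can be summed over a common
range of `j` and compared coefficientwise. Comparing coefficients of `x^{m-2j}` comes down to
`[m+2]_q = [m-2j]_q + q^{m-2j}(1+q^{j+1})[j+1]_q`.
-/

open Finset Polynomial

lemma qInt_ne_zero {n : ℕ} (hn : 0 < n) : qInt n ≠ 0 := by
  have hq : qInt n =
      algebraMap (MvPolynomial (Fin 2) ℚ) F (∑ i ∈ range n, MvPolynomial.X 0 ^ i) := by
    simp [qInt, q]
  rw [hq, map_ne_zero_iff _ (IsFractionRing.injective _ _)]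
  refine ne_of_apply_ne (MvPolynomial.eval 1) ?_
  simp only [map_sum, map_pow, MvPolynomial.eval_X, Pi.one_apply, one_pow, sum_const, card_range,
    nsmul_eq_mul, mul_one, map_zero]
  exact_mod_cast hn.ne'

lemma one_add_q_pow_ne_zero (k : ℕ) : 1 + q ^ k ≠ 0 := by
  have hq : 1 + q ^ k = algebraMap (MvPolynomial (Fin 2) ℚ) F (1 + MvPolynomial.X 0 ^ k) := by
    simp [q]
  rw [hq, map_ne_zero_iff _ (IsFractionRing.injective _ _)]
  refine ne_of_apply_ne (MvPolynomial.eval 1) ?_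
  norm_num

lemma qInt_add (a b : ℕ) : qInt (a + b) = qInt a + q ^ a * qInt b := by
  simp [qInt, sum_range_add, mul_sum, pow_add]

lemma qInt_two_mul (k : ℕ) : qInt (2 * k) = (1 + q ^ k) * qInt k := by
  rw [two_mul, qInt_add]
  ring

lemma qFact_succ (n : ℕ) : qFact (n + 1) = qFact n * qInt (n + 1) :=
  prod_range_succ _ _

lemma qFact_ne_zero (n : ℕ) : qFact n ≠ 0 :=
  prod_ne_zero_iff.mpr fun k _ => qInt_ne_zero k.succ_pos

/-- The falling q-factorial `[n]_q [n-1]_q ⋯ [n-k+1]_q`. For `k > n` the truncated subtraction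
yields the factor `[0]_q = 0`, so it vanishes, as it should. -/
def qDescFact (n k : ℕ) : F := ∏ i ∈ range k, qInt (n - i)

lemma qDescFact_succ (n k : ℕ) : qDescFact n (k + 1) = qDescFact n k * qInt (n - k) :=
  prod_range_succ _ _

lemma succ_qDescFact_succ (n k : ℕ) :
    qDescFact (n + 1) (k + 1) = qInt (n + 1) * qDescFact n k := by
  simp [qDescFact, prod_range_succ', mul_comm]

lemma qDescFact_eq_zero_of_lt {n k : ℕ} (h : n < k) : qDescFact n k = 0 :=
  prod_eq_zero (mem_range.mpr h) (by simp [qInt])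

lemma qDescFact_mul_qFact {n k : ℕ} (h : k ≤ n) : qDescFact n k * qFact (n - k) = qFact n := by
  induction k with
  | zero => simp [qDescFact]
  | succ k ih =>
    obtain ⟨r, hr⟩ : ∃ r, n - k = r + 1 := ⟨n - k - 1, by omega⟩
    rw [← ih (by omega), qDescFact_succ, hr, qFact_succ, show n - (k + 1) = r by omega]
    ring

def hWeight (t : F) (j : ℕ) : F :=
  q ^ (j ^ 2) * t ^ j / ((∏ i ∈ range j, (1 + q ^ (i + 1))) * qFact j)

lemma hWeight_succ_mul (t : F) (j : ℕ) :
    hWeight t (j + 1) * ((1 + q ^ (j + 1)) * qInt (j + 1)) =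
      hWeight t j * (q ^ (2 * j + 1) * t) := by
  have hP : ∏ i ∈ range j, (1 + q ^ (i + 1)) ≠ 0 :=
    prod_ne_zero_iff.mpr fun i _ => one_add_q_pow_ne_zero _
  have hF := qFact_ne_zero j
  have hI := qInt_ne_zero j.succ_pos
  have hW := one_add_q_pow_ne_zero (j + 1)
  simp only [hWeight, prod_range_succ, qFact_succ]
  field_simp
  ring

def hCoeff (t : F) (n j : ℕ) : F := hWeight t j * qDescFact n (2 * j)

lemma hCoeff_zero_right (t : F) (n : ℕ) : hCoeff t n 0 = 1 := by
  simp [hCoeff, hWeight, qDescFact, qFact]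

lemma hCoeff_eq_zero_of_lt {t : F} {n j : ℕ} (h : n < 2 * j) : hCoeff t n j = 0 := by
  rw [hCoeff, qDescFact_eq_zero_of_lt h, mul_zero]

lemma hCoeff_add_two_succ (t : F) (m j : ℕ) :
    hCoeff t (m + 2) (j + 1) =
      hCoeff t (m + 1) (j + 1) + q ^ (m + 1) * t * qInt (m + 1) * hCoeff t m j := by
  rcases lt_or_ge m (2 * j) with hm | hm
  · simp [hCoeff, qDescFact_eq_zero_of_lt hm,
      qDescFact_eq_zero_of_lt (show m + 1 < 2 * (j + 1) by omega),
      qDescFact_eq_zero_of_lt (show m + 2 < 2 * (j + 1) by omega)]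
  have hInt : qInt (m + 2) =
      qInt (m - 2 * j) + q ^ (m - 2 * j) * ((1 + q ^ (j + 1)) * qInt (j + 1)) := by
    rw [← qInt_two_mul, ← qInt_add, show m - 2 * j + 2 * (j + 1) = m + 2 by omega]
  have hq : q ^ (m - 2 * j) * q ^ (2 * j + 1) = q ^ (m + 1) := by
    rw [← pow_add, show m - 2 * j + (2 * j + 1) = m + 1 by omega]
  simp only [hCoeff, show 2 * (j + 1) = 2 * j + 1 + 1 by ring, succ_qDescFact_succ,
    qDescFact_succ]
  linear_combination (hWeight t (j + 1) * qInt (m + 1) * qDescFact m (2 * j)) * hInt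
    + (q ^ (m - 2 * j) * qInt (m + 1) * qDescFact m (2 * j)) * hWeight_succ_mul t j
    + (t * qInt (m + 1) * hWeight t j * qDescFact m (2 * j)) * hq

lemma h_eq_sum_hCoeff (t : F) (n : ℕ) :
    h t n = ∑ j ∈ range (n / 2 + 1), C (hCoeff t n j) * X ^ (n - 2 * j) := by
  refine sum_congr rfl fun j hj => ?_
  have hj : 2 * j ≤ n := by have := mem_range.mp hj; omega
  rw [hCoeff, hWeight, ← qDescFact_mul_qFact hj, ← mul_assoc,
    mul_div_mul_right _ _ (qFact_ne_zero _), mul_div_right_comm]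

lemma sum_range_hCoeff_mul_of_le (t : F) {n N : ℕ} (hN : n / 2 + 1 ≤ N) (g : ℕ → F[X]) :
    ∑ j ∈ range (n / 2 + 1), C (hCoeff t n j) * g j =
      ∑ j ∈ range N, C (hCoeff t n j) * g j := by
  refine sum_subset (range_subset_range.mpr hN) fun j _ hj => ?_
  rw [hCoeff_eq_zero_of_lt (by simp at hj; omega), C_0, zero_mul]

lemma h_add_two (t : F) (m : ℕ) :
    h t (m + 2) = X * h t (m + 1) + C (q ^ (m + 1) * t * qInt (m + 1)) * h t m := by
  have hL :
      h t (m + 2) = ∑ j ∈ range (m + 2), C (hCoeff t (m + 2) j) * X ^ (m + 2 - 2 * j) := by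
    rw [h_eq_sum_hCoeff, sum_range_hCoeff_mul_of_le t (N := m + 2) (by omega)]
  have hX :
      X * h t (m + 1) = ∑ j ∈ range (m + 2), C (hCoeff t (m + 1) j) * X ^ (m + 2 - 2 * j) := by
    rw [h_eq_sum_hCoeff, mul_sum, ← sum_range_hCoeff_mul_of_le t (n := m + 1) (by omega)]
    refine sum_congr rfl fun j hj => ?_
    have hj : 2 * j ≤ m + 1 := by have := mem_range.mp hj; omega
    rw [mul_left_comm, ← pow_succ', show m + 1 - 2 * j + 1 = m + 2 - 2 * j by omega]
  have hC : C (q ^ (m + 1) * t * qInt (m + 1)) * h t m =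
      ∑ j ∈ range (m + 1),
        C (q ^ (m + 1) * t * qInt (m + 1) * hCoeff t m j) * X ^ (m - 2 * j) := by
    rw [h_eq_sum_hCoeff, sum_range_hCoeff_mul_of_le t (N := m + 1) (by omega), mul_sum]
    simp only [C_mul, mul_assoc]
  rw [hL, hX, hC, sum_range_succ', sum_range_succ' _ (m + 1)]
  simp only [hCoeff_add_two_succ, hCoeff_zero_right, C_add, add_mul, sum_add_distrib,
    show ∀ j, m + 2 - 2 * (j + 1) = m - 2 * j by omega]
  ring

theorem h_recurrence (n : ℕ) (hn : 2 ≤ n) :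
    h s n =
      Polynomial.X * h s (n - 1) +
        Polynomial.C (q ^ (n - 1) * s * qInt (n - 1)) * h s (n - 2) := by
  obtain ⟨m, rfl⟩ : ∃ m, n = m + 2 := ⟨n - 2, by omega⟩
  exact h_add_two s m

end
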